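/- Let f ∈ C(R,K) have the wavelet expansion f = ∑_{r∈ℛ} b_r(f) χ_r. Then f ∈ C^1(R,K) if and only if for every a ∈ R the limit lim_{r→a, r∈ℛ_+\{a}} b_r(f)γ_r^{-1} exists. -/

import Mathlib

open scoped ENNReal NNReal
open Filter Topology

noncomputable section

namespace DSW

variable {K : Type*} [NontriviallyNormedField K] [CompleteSpace K] [IsUltrametricDist K]

/-- The ring of integers `R = {x : K | ‖x‖ ≤ 1}`, as a subset of `K`. -/
def Rint (K : Type*) [NontriviallyNormedField K] : Set K := {x : K | ‖x‖ ≤ 1}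

/-- `∇ⁿR`: the set of tuples of pairwise distinct elements of `R`. -/
def nabla (K : Type*) [NontriviallyNormedField K] (n : ℕ) : Set (Fin n → K) :=
  {x | (∀ i, ‖x i‖ ≤ 1) ∧ Function.Injective x}

/-- The `n`-th difference quotient `Φₙ f`. -/
def Phi (f : K → K) : ∀ n : ℕ, (Fin (n + 1) → K) → K
  | 0, x => f (x 0)
  | n + 1, x =>
      (Phi f n (Fin.cons (x 0) fun i => x i.succ.succ) -
        Phi f n (Fin.cons (x 1) fun i => x i.succ.succ)) / (x 0 - x 1)

/-- `f` is a `Cⁿ`-function: `Φₙ f` extends to a continuous function on `R^(n+1)`. -/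
def IsCn (f : K → K) (n : ℕ) : Prop :=
  ∃ g : (Fin (n + 1) → K) → K,
    ContinuousOn g {x | ∀ i, ‖x i‖ ≤ 1} ∧
      ∀ x : Fin (n + 1) → K, (∀ i, ‖x i‖ ≤ 1) → Function.Injective x → g x = Phi f n x

/-- `Dₙ f a = Φₙ f (a, …, a)`, defined (for `n ≥ 1`) as the limit of `Φₙ f` at the
diagonal point `(a, …, a)`, and `D₀ f = f`. -/
def Dq (f : K → K) : ℕ → K → K
  | 0 => f
  | n + 1 => fun a =>
      limUnder (𝓝[{x : Fin (n + 2) → K | Function.Injective x}] fun _ => a) (Phi f (n + 1))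

/-- `ψⱼ f (x, y) = (f x − f y − ∑_{l=1}^{j} (x−y)^l Dₗf y) / (x−y)^(j+1)`. -/
def psi (f : K → K) (j : ℕ) (x y : K) : K :=
  (f x - f y - ∑ l ∈ Finset.Icc 1 j, (x - y) ^ l * Dq f l y) / (x - y) ^ (j + 1)

variable (π : K) (𝒯 : Set K)

/-- `ℛₘ`: the set of sums `∑_{i<m} aᵢ πⁱ` with digits in `𝒯`. -/
def Rm (m : ℕ) : Set K :=
  {x | ∃ a : Fin m → K, (∀ i, a i ∈ 𝒯) ∧ x = ∑ i, a i * π ^ (i : ℕ)}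

/-- `ℛ = ⋃ₘ ℛₘ`. -/
def RR : Set K := ⋃ m, Rm π 𝒯 m

/-- `ℛ₊ = ℛ \ {0}`. -/
def RPlus : Set K := RR π 𝒯 \ {0}

/-- The length `l(r)`: the least `m` with `r ∈ ℛₘ`. -/
def len (r : K) : ℕ := sInf {m | r ∈ Rm π 𝒯 m}

/-- `χ_r`: characteristic function of the disk `{x : ‖x − r‖ ≤ ‖π‖^(l r)}`. -/
def chi (r x : K) : K := if ‖x - r‖ ≤ ‖π‖ ^ len π 𝒯 r then 1 else 0

/-- The truncation `x_m`: the unique element of `ℛₘ` with `‖x − x_m‖ ≤ ‖π‖^m`. -/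
def trunc (x : K) (m : ℕ) : K :=
  Classical.epsilon fun s => s ∈ Rm π 𝒯 m ∧ ‖x - s‖ ≤ ‖π‖ ^ m

/-- `r₋`: the truncation of `r` dropping the top digit. -/
def rminus (r : K) : K := trunc π 𝒯 r (len π 𝒯 r - 1)

open Classical in
/-- `γ_r = 1` if `r = 0`, `γ_r = r − r₋` otherwise. -/
def gamma (r : K) : K := if r = 0 then 1 else r - rminus π 𝒯 r

open Classical in
/-- The wavelet coefficients `b_r(f)` of a continuous function. -/
def b0 (f : K → K) (r : K) : K := if r = 0 then f 0 else f r - f (rminus π 𝒯 r)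

/-- `c` is the coefficient family of the expansion of `f` with respect to the wavelet
basis `{γ_r^(n−j) (x − r)^j χ_r(x) : r ∈ ℛ, 0 ≤ j ≤ n}` of `Cⁿ(R, K)`. -/
def IsExpansion (n : ℕ) (f : K → K) (c : K → ℕ → K) : Prop :=
  ∀ x ∈ Rint K, HasSum
    (fun p : RR π 𝒯 × Fin (n + 1) =>
      c ↑p.1 ↑p.2 * gamma π 𝒯 ↑p.1 ^ (n - (p.2 : ℕ)) * (x - ↑p.1) ^ (p.2 : ℕ) *
        chi π 𝒯 ↑p.1 x)
    (f x)

/-- The coefficients `b_r^{n,j}(f)` of the expansion of `f ∈ Cⁿ(R,K)`. -/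
def bcoef (n : ℕ) (f : K → K) : K → ℕ → K := Classical.epsilon (IsExpansion π 𝒯 n f)

/-- The norm `|f|_n` on `Cⁿ(R, K)`, with values in `ℝ≥0∞`; `|f|_0` is the sup norm and
`|f|_(n+1) = sup_{r ∈ ℛ} max_{0 ≤ j ≤ n} |b_r^{n,j}(f) γ_r⁻¹|`. -/
def CnNorm : ℕ → (K → K) → ℝ≥0∞
  | 0, f => ⨆ x : Rint K, (‖f ↑x‖₊ : ℝ≥0∞)
  | n + 1, f =>
      ⨆ r : RR π 𝒯, ⨆ j : Fin (n + 1),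
        (‖bcoef π 𝒯 n f ↑r ↑j * (gamma π 𝒯 ↑r)⁻¹‖₊ : ℝ≥0∞)

/-- `K` is a local field with uniformizer `π`, residue field of cardinality `q`, and
set of residue representatives `𝒯` (containing `0`). -/
structure LocalFieldData (π : K) (𝒯 : Set K) (q : ℕ) : Prop where
  one_lt_q : 1 < q
  norm_pi : ‖π‖ = (q : ℝ)⁻¹
  norm_discrete : ∀ x : K, x ≠ 0 → ∃ n : ℤ, ‖x‖ = ‖π‖ ^ n
  rep_subset : 𝒯 ⊆ Rint K
  zero_mem : (0 : K) ∈ 𝒯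
  finite_rep : 𝒯.Finite
  card_rep : Nat.card 𝒯 = q
  rep_unique : ∀ x : K, ‖x‖ ≤ 1 → ∃! t, t ∈ 𝒯 ∧ ‖x - t‖ < 1


/-- The norm `|f|₁ = sup_{r ∈ ℛ} |b_r(f) γ_r⁻¹|` on `C¹(R, K)`. -/
def wnorm1 (f : K → K) : ℝ≥0∞ :=
  ⨆ r : RR π 𝒯, (‖b0 π 𝒯 f ↑r * (gamma π 𝒯 ↑r)⁻¹‖₊ : ℝ≥0∞)

/-- The `Cⁿ`-antiderivation `Pₙ f (x) = ∑_{j<n} ∑_m f⁽ʲ⁾(x_m)/(j+1)! (x_{m+1} − x_m)^(j+1)`. -/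
def Pn (n : ℕ) (f : K → K) (x : K) : K :=
  ∑ j ∈ Finset.range n, ∑' m : ℕ,
    iteratedDeriv j f (trunc π 𝒯 x m) / (((j + 1).factorial : ℕ) : K) *
      (trunc π 𝒯 x (m + 1) - trunc π 𝒯 x m) ^ (j + 1)

/-- `Pₙ ∘ Pₙ₋₁ ∘ ⋯ ∘ P₁`. -/
def Tnaux : ℕ → (K → K) → K → K
  | 0, f => f
  | n + 1, f => Pn π 𝒯 (n + 1) (Tnaux n f)

/-!
Since `b_r(f) γ_r⁻¹ = Φ₁ f (r, r₋)` and `‖r - r₋‖ ≤ ‖π‖ ^ (l(r) - 1)` with `l(r) → ∞` as `r → a`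
(each `ℛₘ` is finite), a continuous extension of `Φ₁ f` forces the limit. Conversely, let `L` be the
limit at `a`. Along the truncations `x_k → x`, the increments of `f(x) - L x` are
`(b_r(f) γ_r⁻¹ - L)(r - r₋)` with `r = x_(k+1)`; if `‖x - y‖ = ‖π‖ ^ m` then `x_m = y_m`, and the
ultrametric inequality bounds `‖Φ₁ f (x, y) - L‖` by the oscillation of `b_r(f) γ_r⁻¹` near `a`.
So `Φ₁ f`, extended by the limits on the diagonal, is continuous.
-/

theorem norm_sub_le_max_norm_sub {E : Type*} [SeminormedAddCommGroup E] [IsUltrametricDist E]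
    (x y z : E) : ‖x - z‖ ≤ max ‖x - y‖ ‖y - z‖ := by
  simpa only [dist_eq_norm] using dist_triangle_max x y z

theorem norm_sub_le_one {E : Type*} [SeminormedAddCommGroup E] [IsUltrametricDist E] {x y : E}
    (hx : ‖x‖ ≤ 1) (hy : ‖y‖ ≤ 1) : ‖x - y‖ ≤ 1 :=
  (norm_sub_le_max_norm_sub x 0 y).trans (by simpa using ⟨hx, hy⟩)

theorem norm_sub_le_of_tendsto_of_norm_sub_succ_le {E : Type*} [SeminormedAddCommGroup E]
    [IsUltrametricDist E] {s : ℕ → E} {u : E} (hs : Tendsto s atTop (𝓝 u)) {m : ℕ} {C : ℝ}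
    (hC : 0 ≤ C) (h : ∀ k ≥ m, ‖s (k + 1) - s k‖ ≤ C) : ‖u - s m‖ ≤ C := by
  have hN : ∀ N ≥ m, ‖s N - s m‖ ≤ C := by
    intro N hN
    induction N, hN using Nat.le_induction with
    | base => simpa using hC
    | succ N hmN ih => exact (norm_sub_le_max_norm_sub _ (s N) _).trans (max_le (h N hmN) ih)
  exact le_of_tendsto (hs.sub_const _).norm (eventually_atTop.2 ⟨m, hN⟩)

section

omit [CompleteSpace K] [IsUltrametricDist K]
variable {π 𝒯}

theorem eq_zero_of_mem_Rm_zero {s : K} (hs : s ∈ Rm π 𝒯 0) : s = 0 := by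
  obtain ⟨a, -, rfl⟩ := hs
  simp

theorem add_mul_pow_mem_Rm {m : ℕ} {s t : K} (hs : s ∈ Rm π 𝒯 m) (ht : t ∈ 𝒯) :
    s + t * π ^ m ∈ Rm π 𝒯 (m + 1) := by
  obtain ⟨a, ha, rfl⟩ := hs
  refine ⟨Fin.snoc a t, Fin.lastCases (by simpa using ht) (fun i => by simpa using ha i), ?_⟩
  simp [Fin.sum_univ_castSucc]

theorem exists_eq_add_mul_of_mem_Rm_succ {m : ℕ} {s : K} (hs : s ∈ Rm π 𝒯 (m + 1)) :
    ∃ t ∈ 𝒯, ∃ s' ∈ Rm π 𝒯 m, s = t + π * s' := by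
  obtain ⟨a, ha, rfl⟩ := hs
  refine ⟨a 0, ha 0, _, ⟨fun i => a i.succ, fun i => ha i.succ, rfl⟩, ?_⟩
  simp only [Fin.sum_univ_succ, Fin.val_zero, pow_zero, mul_one, Fin.val_succ, Finset.mul_sum]
  congr 1
  exact Finset.sum_congr rfl fun i _ => by ring

theorem Rm_finite (h𝒯 : 𝒯.Finite) (m : ℕ) : (Rm π 𝒯 m).Finite := by
  refine ((Set.Finite.pi fun _ => h𝒯).image fun a : Fin m → K => ∑ i, a i * π ^ (i : ℕ)).subset ?_
  rintro x ⟨a, ha, rfl⟩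
  exact ⟨a, fun i _ => ha i, rfl⟩

theorem Rm_subset_RR (m : ℕ) : Rm π 𝒯 m ⊆ RR π 𝒯 := Set.subset_iUnion (Rm π 𝒯) m

theorem mem_Rm_len {r : K} (hr : r ∈ RR π 𝒯) : r ∈ Rm π 𝒯 (len π 𝒯 r) :=
  Nat.sInf_mem (Set.mem_iUnion.1 hr)

theorem len_le {m : ℕ} {r : K} (hr : r ∈ Rm π 𝒯 m) : len π 𝒯 r ≤ m := Nat.sInf_le hr

theorem len_pos {r : K} (hr : r ∈ RPlus π 𝒯) : 0 < len π 𝒯 r :=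
  Nat.pos_of_ne_zero fun h => hr.2 (eq_zero_of_mem_Rm_zero (h ▸ mem_Rm_len hr.1))

theorem b0_mul_gamma_inv_eq_slope (f : K → K) {r : K} (hr : r ≠ 0) :
    b0 π 𝒯 f r * (gamma π 𝒯 r)⁻¹ = slope f (rminus π 𝒯 r) r := by
  rw [b0, gamma, if_neg hr, if_neg hr, slope_def_field, div_eq_mul_inv]

end

section ExtendSlope

omit [CompleteSpace K] [IsUltrametricDist K]

open Classical in
def extendSlope (f L : K → K) (x : Fin 2 → K) : K :=
  if x 0 = x 1 then L (x 0) else slope f (x 1) (x 0)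

theorem extendSlope_eq_Phi_of_injective {f L : K → K} {x : Fin 2 → K} (hx : Function.Injective x) :
    extendSlope f L x = Phi f 1 x := by
  rw [extendSlope, if_neg (hx.ne (by decide)), slope_def_field]
  rfl

end ExtendSlope

namespace LocalFieldData

section

omit [CompleteSpace K] [IsUltrametricDist K]
variable {π 𝒯} {q : ℕ} (hK : LocalFieldData π 𝒯 q)
include hK

theorem norm_pi_pos : 0 < ‖π‖ := by
  rw [hK.norm_pi]
  exact inv_pos.2 (by exact_mod_cast zero_lt_one.trans hK.one_lt_q)

theorem norm_pi_lt_one : ‖π‖ < 1 := by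
  rw [hK.norm_pi]
  exact inv_lt_one_of_one_lt₀ (by exact_mod_cast hK.one_lt_q)

theorem norm_le_pow_succ_of_lt {x : K} {m : ℕ} (h : ‖x‖ < ‖π‖ ^ m) : ‖x‖ ≤ ‖π‖ ^ (m + 1) := by
  rcases eq_or_ne x 0 with rfl | hx
  · simp
  obtain ⟨n, hn⟩ := hK.norm_discrete x hx
  rw [hn, ← zpow_natCast] at h ⊢
  have hmn := (zpow_lt_zpow_iff_right_of_lt_one₀ hK.norm_pi_pos hK.norm_pi_lt_one).1 h
  exact (zpow_le_zpow_iff_right_of_lt_one₀ hK.norm_pi_pos hK.norm_pi_lt_one).2 (by push_cast; omega)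

theorem exists_mem_ne_zero : ∃ t ∈ 𝒯, t ≠ 0 :=
  Set.exists_ne_of_one_lt_ncard (by rw [← Nat.card_coe_set_eq, hK.card_rep]; exact hK.one_lt_q) 0

theorem zero_mem_Rm (m : ℕ) : (0 : K) ∈ Rm π 𝒯 m :=
  ⟨fun _ => 0, fun _ => hK.zero_mem, by simp⟩

theorem Rm_mono : Monotone (Rm π 𝒯) :=
  monotone_nat_of_le_succ fun m s hs => by
    simpa using add_mul_pow_mem_Rm hs hK.zero_mem

theorem exists_mem_Rm_norm_sub_le {x : K} (hx : ‖x‖ ≤ 1) (m : ℕ) :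
    ∃ s ∈ Rm π 𝒯 m, ‖x - s‖ ≤ ‖π‖ ^ m := by
  induction m with
  | zero => exact ⟨0, hK.zero_mem_Rm 0, by simpa using hx⟩
  | succ m ih =>
    obtain ⟨s, hs, hxs⟩ := ih
    have hπm : 0 < ‖π‖ ^ m := pow_pos hK.norm_pi_pos m
    set u := (x - s) / π ^ m
    have hu : ‖u‖ ≤ 1 := by
      rwa [norm_div, norm_pow, div_le_one hπm]
    obtain ⟨t, ⟨ht, hut⟩, -⟩ := hK.rep_unique u hu
    refine ⟨s + t * π ^ m, add_mul_pow_mem_Rm hs ht, ?_⟩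
    have hx : x - (s + t * π ^ m) = (u - t) * π ^ m := by
      have : (π ^ m : K) ≠ 0 := norm_pos_iff.1 (by rwa [norm_pow])
      rw [sub_mul, div_mul_cancel₀ _ this]
      ring
    rw [hx, norm_mul, norm_pow, pow_succ']
    exact mul_le_mul_of_nonneg_right (by simpa using hK.norm_le_pow_succ_of_lt (m := 0) (by simpa))
      hπm.le

theorem trunc_spec {x : K} (hx : ‖x‖ ≤ 1) (m : ℕ) :
    trunc π 𝒯 x m ∈ Rm π 𝒯 m ∧ ‖x - trunc π 𝒯 x m‖ ≤ ‖π‖ ^ m :=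
  Classical.epsilon_spec (hK.exists_mem_Rm_norm_sub_le hx m)

theorem trunc_mem_Rm {x : K} (hx : ‖x‖ ≤ 1) (m : ℕ) : trunc π 𝒯 x m ∈ Rm π 𝒯 m :=
  (hK.trunc_spec hx m).1

theorem norm_sub_trunc_le {x : K} (hx : ‖x‖ ≤ 1) (m : ℕ) : ‖x - trunc π 𝒯 x m‖ ≤ ‖π‖ ^ m :=
  (hK.trunc_spec hx m).2

theorem tendsto_trunc {x : K} (hx : ‖x‖ ≤ 1) : Tendsto (trunc π 𝒯 x) atTop (𝓝 x) := by
  refine tendsto_iff_norm_sub_tendsto_zero.2 <| squeeze_zero (fun _ => norm_nonneg _)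
    (fun m => ?_) (tendsto_pow_atTop_nhds_zero_of_lt_one (norm_nonneg π) hK.norm_pi_lt_one)
  rw [norm_sub_rev]
  exact hK.norm_sub_trunc_le hx m

theorem tendsto_len_atTop (a : K) : Tendsto (len π 𝒯) (𝓝[RPlus π 𝒯 \ {a}] a) atTop := by
  refine tendsto_atTop.2 fun m => ?_
  have hfar : ∀ᶠ r in 𝓝[RPlus π 𝒯 \ {a}] a, r ∉ Rm π 𝒯 m \ {a} :=
    mem_nhdsWithin_of_mem_nhds <| ((Rm_finite hK.finite_rep m).sdiff.isClosed.isOpen_compl.mem_nhds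
      (by simp))
  filter_upwards [hfar, self_mem_nhdsWithin] with r hfar hr
  by_contra! hlen
  exact hfar ⟨hK.Rm_mono hlen.le (mem_Rm_len hr.1.1), hr.2⟩

end

omit [CompleteSpace K]
variable {π 𝒯} {q : ℕ} (hK : LocalFieldData π 𝒯 q)
include hK

theorem exists_norm_sub_eq_pow {x y : K} (hx : ‖x‖ ≤ 1) (hy : ‖y‖ ≤ 1) (hxy : x ≠ y) :
    ∃ m : ℕ, ‖x - y‖ = ‖π‖ ^ m := by
  obtain ⟨n, hn⟩ := hK.norm_discrete (x - y) (sub_ne_zero.2 hxy)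
  have hn0 : 0 ≤ n := by
    refine (zpow_le_zpow_iff_right_of_lt_one₀ hK.norm_pi_pos hK.norm_pi_lt_one).1 ?_
    simpa [← hn] using norm_sub_le_one hx hy
  exact ⟨n.toNat, by rw [hn, ← zpow_natCast, Int.toNat_of_nonneg hn0]⟩

theorem norm_le_one_of_mem_Rm {m : ℕ} {s : K} (hs : s ∈ Rm π 𝒯 m) : ‖s‖ ≤ 1 := by
  obtain ⟨a, ha, rfl⟩ := hs
  refine IsUltrametricDist.norm_sum_le_of_forall_le_of_nonneg zero_le_one fun i _ => ?_
  rw [norm_mul, norm_pow]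
  exact mul_le_one₀ (hK.rep_subset (ha i)) (by positivity)
    (pow_le_one₀ (norm_nonneg _) hK.norm_pi_lt_one.le)

theorem norm_le_one_of_mem_RR {r : K} (hr : r ∈ RR π 𝒯) : ‖r‖ ≤ 1 :=
  hK.norm_le_one_of_mem_Rm (mem_Rm_len hr)

theorem eq_of_mem_Rm_of_norm_sub_le {m : ℕ} {s t : K} (hs : s ∈ Rm π 𝒯 m) (ht : t ∈ Rm π 𝒯 m)
    (h : ‖s - t‖ ≤ ‖π‖ ^ m) : s = t := by
  induction m generalizing s t with
  | zero => rw [eq_zero_of_mem_Rm_zero hs, eq_zero_of_mem_Rm_zero ht]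
  | succ m ih =>
    obtain ⟨a, ha, s', hs', rfl⟩ := exists_eq_add_mul_of_mem_Rm_succ hs
    obtain ⟨b, hb, t', ht', rfl⟩ := exists_eq_add_mul_of_mem_Rm_succ ht
    have hπ : ‖π‖ * ‖s' - t'‖ < 1 :=
      mul_lt_one_of_nonneg_of_lt_one_left (norm_nonneg _) hK.norm_pi_lt_one
        (norm_sub_le_one (hK.norm_le_one_of_mem_Rm hs') (hK.norm_le_one_of_mem_Rm ht'))
    have hab : a = b := by
      refine (hK.rep_unique a (hK.rep_subset ha)).unique ⟨ha, by simp⟩ ⟨hb, ?_⟩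
      have hsub : a - b = (a + π * s' - (b + π * t')) - π * (s' - t') := by ring
      rw [hsub]
      exact (norm_sub_le_max_norm_sub _ 0 _).trans_lt (by
        simpa using ⟨h.trans_lt (pow_lt_one₀ (norm_nonneg _) hK.norm_pi_lt_one (by omega)), hπ⟩)
    subst hab
    have hsub : a + π * s' - (a + π * t') = π * (s' - t') := by ring
    rw [hsub, norm_mul, pow_succ', mul_le_mul_iff_right₀ hK.norm_pi_pos] at h
    rw [ih hs' ht' h]

theorem trunc_eq {x s : K} (hx : ‖x‖ ≤ 1) {m : ℕ} (hs : s ∈ Rm π 𝒯 m) (h : ‖x - s‖ ≤ ‖π‖ ^ m) :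
    trunc π 𝒯 x m = s :=
  hK.eq_of_mem_Rm_of_norm_sub_le (hK.trunc_mem_Rm hx m) hs <|
    (norm_sub_le_max_norm_sub _ x _).trans
      (max_le (by rw [norm_sub_rev]; exact hK.norm_sub_trunc_le hx m) h)

theorem rminus_mem_Rm {r : K} (hr : r ∈ RR π 𝒯) : rminus π 𝒯 r ∈ Rm π 𝒯 (len π 𝒯 r - 1) :=
  hK.trunc_mem_Rm (hK.norm_le_one_of_mem_RR hr) _

theorem norm_sub_rminus_le {r : K} (hr : r ∈ RR π 𝒯) :
    ‖r - rminus π 𝒯 r‖ ≤ ‖π‖ ^ (len π 𝒯 r - 1) :=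
  hK.norm_sub_trunc_le (hK.norm_le_one_of_mem_RR hr) _

theorem rminus_ne_self {r : K} (hr : r ∈ RPlus π 𝒯) : rminus π 𝒯 r ≠ r := by
  intro h
  have := len_le (h ▸ hK.rminus_mem_Rm hr.1)
  have := len_pos hr
  omega

section Jump

variable {u : K} (hu : ‖u‖ ≤ 1) {k : ℕ} (hne : trunc π 𝒯 u (k + 1) ≠ trunc π 𝒯 u k)
include hu hne

theorem len_trunc_succ : len π 𝒯 (trunc π 𝒯 u (k + 1)) = k + 1 := by
  have hmem := hK.trunc_mem_Rm hu (k + 1)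
  refine le_antisymm (len_le hmem) (Nat.succ_le_of_lt (not_le.1 fun hle => hne ?_))
  refine (hK.trunc_eq hu (hK.Rm_mono hle (mem_Rm_len (Rm_subset_RR _ hmem))) ?_).symm
  exact (hK.norm_sub_trunc_le hu _).trans
    (pow_le_pow_of_le_one (norm_nonneg _) hK.norm_pi_lt_one.le (by omega))

theorem trunc_succ_mem_RPlus : trunc π 𝒯 u (k + 1) ∈ RPlus π 𝒯 := by
  refine ⟨Rm_subset_RR _ (hK.trunc_mem_Rm hu _), fun h0 => ?_⟩
  have := hK.len_trunc_succ hu hne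
  rw [Set.mem_singleton_iff.1 h0, Nat.eq_zero_of_le_zero (len_le (hK.zero_mem_Rm 0))] at this
  omega

theorem rminus_trunc_succ : rminus π 𝒯 (trunc π 𝒯 u (k + 1)) = trunc π 𝒯 u k := by
  rw [rminus, hK.len_trunc_succ hu hne, Nat.add_sub_cancel]
  refine hK.trunc_eq (hK.norm_le_one_of_mem_Rm (hK.trunc_mem_Rm hu _)) (hK.trunc_mem_Rm hu k) ?_
  refine (norm_sub_le_max_norm_sub _ u _).trans (max_le ?_ (hK.norm_sub_trunc_le hu k))
  rw [norm_sub_rev]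
  exact (hK.norm_sub_trunc_le hu _).trans
    (pow_le_pow_of_le_one (norm_nonneg _) hK.norm_pi_lt_one.le (by omega))

end Jump

theorem mem_RPlus_add_mul_pow {m n : ℕ} {s t : K} (hs : s ∈ Rm π 𝒯 m) (ht : t ∈ 𝒯) (ht0 : t ≠ 0)
    (hmn : m ≤ n) : s + t * π ^ n ∈ RPlus π 𝒯 := by
  refine ⟨Rm_subset_RR _ (add_mul_pow_mem_Rm (hK.Rm_mono hmn hs) ht), fun h0 => ht0 ?_⟩
  have hs0 : s = 0 := by
    refine hK.eq_of_mem_Rm_of_norm_sub_le hs (hK.zero_mem_Rm m) ?_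
    rw [sub_zero, eq_neg_of_add_eq_zero_left (Set.mem_singleton_iff.1 h0), norm_neg, norm_mul,
      norm_pow]
    exact (mul_le_of_le_one_left (by positivity) (hK.rep_subset ht)).trans
      (pow_le_pow_of_le_one (norm_nonneg _) hK.norm_pi_lt_one.le hmn)
  rw [hs0, zero_add, Set.mem_singleton_iff] at h0
  exact (mul_eq_zero.1 h0).resolve_right (pow_ne_zero _ (norm_pos_iff.1 hK.norm_pi_pos))

theorem exists_mem_RPlus_ne_norm_sub_le {a : K} (ha : ‖a‖ ≤ 1) (m : ℕ) (b : K) :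
    ∃ r ∈ RPlus π 𝒯, r ≠ b ∧ ‖a - r‖ ≤ ‖π‖ ^ m := by
  obtain ⟨t, ht, ht0⟩ := hK.exists_mem_ne_zero
  set c : ℕ → K := fun i => trunc π 𝒯 a m + t * π ^ (m + i)
  have hc : ∀ i, c i ∈ RPlus π 𝒯 ∧ ‖a - c i‖ ≤ ‖π‖ ^ m := fun i =>
    ⟨hK.mem_RPlus_add_mul_pow (hK.trunc_mem_Rm ha m) ht ht0 (Nat.le_add_right m i), by
      refine (norm_sub_le_max_norm_sub _ (trunc π 𝒯 a m) _).trans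
        (max_le (hK.norm_sub_trunc_le ha m) ?_)
      simp only [c, sub_add_cancel_left, norm_neg, norm_mul, norm_pow]
      exact (mul_le_of_le_one_left (by positivity) (hK.rep_subset ht)).trans
        (pow_le_pow_of_le_one (norm_nonneg _) hK.norm_pi_lt_one.le (Nat.le_add_right m i))⟩
  have hc01 : c 0 ≠ c 1 := by
    intro h
    have := congrArg norm (mul_left_cancel₀ ht0 (add_left_cancel h))
    rw [norm_pow, norm_pow] at this
    exact (pow_lt_pow_right_of_lt_one₀ hK.norm_pi_pos hK.norm_pi_lt_one (by omega)).ne' this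
  by_cases hb : c 0 = b
  · exact ⟨c 1, (hc 1).1, hb ▸ hc01.symm, (hc 1).2⟩
  · exact ⟨c 0, (hc 0).1, hb, (hc 0).2⟩

theorem nhdsWithin_RPlus_diff_neBot {a : K} (ha : ‖a‖ ≤ 1) :
    (𝓝[RPlus π 𝒯 \ {a}] a).NeBot := by
  refine mem_closure_iff_nhdsWithin_neBot.1 (Metric.mem_closure_iff.2 fun ε hε => ?_)
  obtain ⟨m, hm⟩ := exists_pow_lt_of_lt_one hε hK.norm_pi_lt_one
  obtain ⟨r, hr, hra, hr_le⟩ := hK.exists_mem_RPlus_ne_norm_sub_le ha m a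
  exact ⟨r, ⟨hr, hra⟩, by rw [dist_eq_norm]; exact hr_le.trans_lt hm⟩

theorem tendsto_rminus (a : K) : Tendsto (rminus π 𝒯) (𝓝[RPlus π 𝒯 \ {a}] a) (𝓝 a) := by
  have hγ : Tendsto (fun r => r - rminus π 𝒯 r) (𝓝[RPlus π 𝒯 \ {a}] a) (𝓝 0) := by
    refine squeeze_zero_norm' ?_ ((tendsto_pow_atTop_nhds_zero_of_lt_one (norm_nonneg π)
      hK.norm_pi_lt_one).comp ((tendsto_sub_atTop_nat 1).comp (hK.tendsto_len_atTop a)))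
    filter_upwards [self_mem_nhdsWithin] with r hr
    exact hK.norm_sub_rminus_le hr.1.1
  simpa using (tendsto_nhdsWithin_of_tendsto_nhds tendsto_id).sub hγ

theorem exists_tendsto_b0_mul_gamma_inv_of_isCn {f : K → K} (hf : IsCn f 1) {a : K}
    (ha : a ∈ Rint K) :
    ∃ L, Tendsto (fun r => b0 π 𝒯 f r * (gamma π 𝒯 r)⁻¹) (𝓝[RPlus π 𝒯 \ {a}] a) (𝓝 L) := by
  obtain ⟨g, hg, hgΦ⟩ := hf
  have hpair : Tendsto (fun r => ![r, rminus π 𝒯 r]) (𝓝[RPlus π 𝒯 \ {a}] a)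
      (𝓝[{x | ∀ i, ‖x i‖ ≤ 1}] fun _ => a) := by
    refine tendsto_nhdsWithin_iff.2 ⟨tendsto_pi_nhds.2 fun i => ?_, ?_⟩
    · fin_cases i
      · exact tendsto_nhdsWithin_of_tendsto_nhds tendsto_id
      · exact hK.tendsto_rminus a
    · filter_upwards [self_mem_nhdsWithin] with r hr i
      fin_cases i
      · exact hK.norm_le_one_of_mem_RR hr.1.1
      · exact hK.norm_le_one_of_mem_Rm (hK.rminus_mem_Rm hr.1.1)
  refine ⟨g fun _ => a, ((hg _ fun _ => ha).tendsto.comp hpair).congr' ?_⟩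
  filter_upwards [self_mem_nhdsWithin, hpair self_mem_nhdsWithin] with r hr hmem
  have hinj : Function.Injective ![r, rminus π 𝒯 r] := by
    have hne := hK.rminus_ne_self hr.1
    simp [Function.Injective, Fin.forall_fin_two, hne, hne.symm]
  rw [Function.comp_apply, hgΦ _ hmem hinj, b0_mul_gamma_inv_eq_slope f hr.1.2, slope_def_field]
  rfl

theorem norm_sub_sub_trunc_le {f : K → K} (hf : ContinuousOn f (Rint K)) {u : K} (hu : ‖u‖ ≤ 1)
    (m : ℕ) {L : K} {ε : ℝ} (hε : 0 ≤ ε)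
    (hb : ∀ r ∈ RPlus π 𝒯, m < len π 𝒯 r → ‖r - u‖ ≤ ‖π‖ ^ (m + 1) →
      ‖b0 π 𝒯 f r * (gamma π 𝒯 r)⁻¹ - L‖ ≤ ε) :
    ‖(f u - L * u) - (f (trunc π 𝒯 u m) - L * trunc π 𝒯 u m)‖ ≤ ε * ‖π‖ ^ m := by
  have hf_trunc : Tendsto (fun k => f (trunc π 𝒯 u k)) atTop (𝓝 (f u)) :=
    (hf u hu).tendsto.comp (tendsto_nhdsWithin_iff.2
      ⟨hK.tendsto_trunc hu, .of_forall fun k => hK.norm_le_one_of_mem_Rm (hK.trunc_mem_Rm hu k)⟩)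
  refine norm_sub_le_of_tendsto_of_norm_sub_succ_le
    (s := fun k => f (trunc π 𝒯 u k) - L * trunc π 𝒯 u k)
    (hf_trunc.sub (tendsto_const_nhds.mul (hK.tendsto_trunc hu))) (by positivity) fun k hk => ?_
  by_cases hne : trunc π 𝒯 u (k + 1) = trunc π 𝒯 u k
  · simp only [hne, sub_self, norm_zero]
    positivity
  set r := trunc π 𝒯 u (k + 1)
  have hr : r ∈ RPlus π 𝒯 := hK.trunc_succ_mem_RPlus hu hne
  have hlen : len π 𝒯 r = k + 1 := hK.len_trunc_succ hu hne
  have hminus : rminus π 𝒯 r = trunc π 𝒯 u k := hK.rminus_trunc_succ hu hne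
  have hγ : r - rminus π 𝒯 r ≠ 0 := sub_ne_zero.2 (hK.rminus_ne_self hr).symm
  have hstep : f r - L * r - (f (trunc π 𝒯 u k) - L * trunc π 𝒯 u k) =
      (b0 π 𝒯 f r * (gamma π 𝒯 r)⁻¹ - L) * (r - rminus π 𝒯 r) := by
    rw [b0_mul_gamma_inv_eq_slope f hr.2, slope_def_field, sub_mul, div_mul_cancel₀ _ hγ, hminus]
    ring
  rw [hstep, norm_mul]
  refine mul_le_mul (hb r hr (by omega) ?_) ?_ (norm_nonneg _) hε
  · rw [norm_sub_rev]
    exact (hK.norm_sub_trunc_le hu _).trans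
      (pow_le_pow_of_le_one (norm_nonneg _) hK.norm_pi_lt_one.le (by omega))
  · refine (hK.norm_sub_rminus_le hr.1).trans ?_
    rw [hlen, Nat.add_sub_cancel]
    exact pow_le_pow_of_le_one (norm_nonneg _) hK.norm_pi_lt_one.le hk

theorem exists_norm_slope_sub_le {f : K → K} (hf : ContinuousOn f (Rint K)) {a L : K}
    (hL : Tendsto (fun r => b0 π 𝒯 f r * (gamma π 𝒯 r)⁻¹) (𝓝[RPlus π 𝒯 \ {a}] a) (𝓝 L))
    {ε : ℝ} (hε : 0 < ε) :
    ∃ δ > 0, ∀ x y : K, ‖x‖ ≤ 1 → ‖y‖ ≤ 1 → x ≠ y → ‖x - a‖ < δ → ‖y - a‖ < δ →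
      ‖slope f y x - L‖ ≤ ε := by
  obtain ⟨δ₀, hδ₀, hball⟩ := Metric.tendsto_nhdsWithin_nhds.1 hL ε hε
  -- `δ ≤ ‖π‖ ^ l(a)` forces `l(a) < m`, so the points `r` of length `> m` below differ from `a`.
  set δ := min δ₀ (‖π‖ ^ len π 𝒯 a)
  refine ⟨δ, lt_min hδ₀ (pow_pos hK.norm_pi_pos _), fun x y hx hy hxy hxa hya => ?_⟩
  obtain ⟨m, hm⟩ := hK.exists_norm_sub_eq_pow hx hy hxy
  have hmδ : ‖π‖ ^ m < δ :=
    hm ▸ (norm_sub_le_max_norm_sub x a y).trans_lt (max_lt hxa (by rwa [norm_sub_rev]))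
  have hb : ∀ u, ‖u - a‖ < δ → ∀ r ∈ RPlus π 𝒯, m < len π 𝒯 r → ‖r - u‖ ≤ ‖π‖ ^ (m + 1) →
      ‖b0 π 𝒯 f r * (gamma π 𝒯 r)⁻¹ - L‖ ≤ ε := by
    intro u hua r hr hlen hru
    have hra : ‖r - a‖ < δ := (norm_sub_le_max_norm_sub r u a).trans_lt (max_lt
      ((hru.trans (pow_le_pow_of_le_one (norm_nonneg _) hK.norm_pi_lt_one.le (by omega))).trans_lt
        hmδ) hua)
    have hne : r ≠ a := by
      rintro rfl
      exact (pow_le_pow_of_le_one (norm_nonneg _) hK.norm_pi_lt_one.le hlen.le).not_gt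
        (hmδ.trans_le (min_le_right _ _))
    rw [← dist_eq_norm]
    exact (hball ⟨hr, hne⟩ (by rw [dist_eq_norm]; exact hra.trans_le (min_le_left _ _))).le
  have htrunc : trunc π 𝒯 y m = trunc π 𝒯 x m :=
    hK.trunc_eq hy (hK.trunc_mem_Rm hx m) <| (norm_sub_le_max_norm_sub y x _).trans
      (max_le (by rw [norm_sub_rev, hm]) (hK.norm_sub_trunc_le hx m))
  have hx_m := hK.norm_sub_sub_trunc_le hf hx m hε.le (hb x hxa)
  have hy_m := hK.norm_sub_sub_trunc_le hf hy m hε.le (hb y hya)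
  rw [htrunc] at hy_m
  have hxy0 : (0 : ℝ) < ‖x - y‖ := norm_pos_iff.2 (sub_ne_zero.2 hxy)
  have hlin : ‖f x - f y - L * (x - y)‖ ≤ ε * ‖x - y‖ := by
    rw [hm]
    calc ‖f x - f y - L * (x - y)‖ = ‖(f x - L * x) - (f y - L * y)‖ := by ring_nf
      _ ≤ ε * ‖π‖ ^ m := (norm_sub_le_max_norm_sub _ _ _).trans
          (max_le hx_m (by rwa [norm_sub_rev]))
  rw [slope_def_field, ← mul_div_cancel_right₀ L (sub_ne_zero.2 hxy), div_sub_div_same, norm_div,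
    div_le_iff₀ hxy0]
  exact hlin

theorem norm_sub_le_of_forall_norm_slope_sub_le {f : K → K} {a b L Lb : K} {δ ε : ℝ}
    (hb : ‖b‖ ≤ 1) (hba : ‖b - a‖ < δ)
    (hLb : Tendsto (fun r => b0 π 𝒯 f r * (gamma π 𝒯 r)⁻¹) (𝓝[RPlus π 𝒯 \ {b}] b) (𝓝 Lb))
    (hslope : ∀ x y : K, ‖x‖ ≤ 1 → ‖y‖ ≤ 1 → x ≠ y → ‖x - a‖ < δ → ‖y - a‖ < δ →
      ‖slope f y x - L‖ ≤ ε) :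
    ‖Lb - L‖ ≤ ε := by
  have := hK.nhdsWithin_RPlus_diff_neBot hb
  have hball : Metric.ball a δ ∈ 𝓝 b := Metric.isOpen_ball.mem_nhds (mem_ball_iff_norm.2 hba)
  refine le_of_tendsto (hLb.sub_const L).norm ?_
  filter_upwards [self_mem_nhdsWithin, nhdsWithin_le_nhds hball, hK.tendsto_rminus b hball]
    with r hr hra hr'a
  rw [b0_mul_gamma_inv_eq_slope f hr.1.2]
  exact hslope r _ (hK.norm_le_one_of_mem_RR hr.1.1)
    (hK.norm_le_one_of_mem_Rm (hK.rminus_mem_Rm hr.1.1)) (hK.rminus_ne_self hr.1).symm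
    (mem_ball_iff_norm.1 hra) (mem_ball_iff_norm.1 hr'a)

theorem continuousOn_extendSlope {f L : K → K} (hf : ContinuousOn f (Rint K))
    (hL : ∀ a ∈ Rint K,
      Tendsto (fun r => b0 π 𝒯 f r * (gamma π 𝒯 r)⁻¹) (𝓝[RPlus π 𝒯 \ {a}] a) (𝓝 (L a))) :
    ContinuousOn (extendSlope f L) {x | ∀ i, ‖x i‖ ≤ 1} := by
  intro p hp
  by_cases hp01 : p 0 = p 1
  · refine Metric.continuousWithinAt_iff.2 fun ε hε => ?_
    obtain ⟨δ, hδ, hslope⟩ := hK.exists_norm_slope_sub_le hf (hL _ (hp 0)) (half_pos hε)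
    refine ⟨δ, hδ, fun x hx hxp => ?_⟩
    have hx0 : ‖x 0 - p 0‖ < δ := by rw [← dist_eq_norm]; exact (dist_pi_lt_iff hδ).1 hxp 0
    have hx1 : ‖x 1 - p 0‖ < δ := by rw [hp01, ← dist_eq_norm]; exact (dist_pi_lt_iff hδ).1 hxp 1
    rw [dist_eq_norm, extendSlope, extendSlope, if_pos hp01]
    refine lt_of_le_of_lt ?_ (half_lt_self hε)
    split_ifs with hx01
    · exact hK.norm_sub_le_of_forall_norm_slope_sub_le (hx 0) hx0 (hL _ (hx 0)) hslope
    · exact hslope _ _ (hx 0) (hx 1) hx01 hx0 hx1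
  · have hcont : ContinuousWithinAt (fun x : Fin 2 → K => slope f (x 1) (x 0))
        {x | ∀ i, ‖x i‖ ≤ 1} p := by
      simp only [slope_def_field]
      refine ContinuousWithinAt.div (.sub ?_ ?_)
        ((continuous_apply 0).sub (continuous_apply 1)).continuousWithinAt (sub_ne_zero.2 hp01)
      · exact (hf _ (hp 0)).comp (f := fun x : Fin 2 → K => x 0)
          (continuous_apply 0).continuousWithinAt fun x hx => hx 0
      · exact (hf _ (hp 1)).comp (f := fun x : Fin 2 → K => x 1)
          (continuous_apply 1).continuousWithinAt fun x hx => hx 1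
    refine hcont.congr_of_eventuallyEq ?_ (if_neg hp01)
    filter_upwards [mem_nhdsWithin_of_mem_nhds
      ((isOpen_ne_fun (f := fun x : Fin 2 → K => x 0) (g := fun x => x 1) (continuous_apply 0)
        (continuous_apply 1)).mem_nhds hp01)] with x hx
    exact if_neg hx

end LocalFieldData

/-- A continuous `f : R → K` with wavelet coefficients `b_r(f)` is a `C¹`-function iff for
every `a ∈ R` the limit of `b_r(f)γ_r⁻¹` as `r → a` over `r ∈ ℛ₊ \ {a}` exists. -/
theorem statement_7 (π : K) (𝒯 : Set K) (q : ℕ) (hK : LocalFieldData π 𝒯 q)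
    (f : K → K) (hf : ContinuousOn f (Rint K)) :
    IsCn f 1 ↔
      ∀ a ∈ Rint K, ∃ L : K,
        Tendsto (fun r => b0 π 𝒯 f r * (gamma π 𝒯 r)⁻¹) (𝓝[RPlus π 𝒯 \ {a}] a) (𝓝 L) := by
  refine ⟨fun hC a ha => hK.exists_tendsto_b0_mul_gamma_inv_of_isCn hC ha, fun hlim => ?_⟩
  choose! L hL using hlim
  exact ⟨extendSlope f L, hK.continuousOn_extendSlope hf hL,
    fun x _ hx => extendSlope_eq_Phi_of_injective hx⟩

end DSW
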